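/- Let a(x) be a polynomial sequence of binomial type associated to a delta functional A (so A^k a_n(x) = k! δ_{n=k}). If p(x) is a nontrivial polynomial set map of binomial type, then p_S(x) = ∑_{σ ⊢ S} a_{ℓ(σ)}(x) ∏_{T ∈ σ} A p_T(x) for every finite S ⊆ V. -/

import Mathlib

open scoped Classical
open Polynomial

noncomputable section

/-- The set of set partitions of a finite set `S`. -/
def partitions {V : Type*} [DecidableEq V] (S : Finset V) :
    Finset (Finset (Finset V)) :=
  S.powerset.powerset.filter
    (fun P => (∀ T ∈ P, T ≠ ∅) ∧ P.sup id = S ∧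
      ∀ T ∈ P, ∀ U ∈ P, T ≠ U → Disjoint T U)

/-- A polynomial set map is of binomial type if
`p_S(x+y) = ∑_{T ⊎ U = S} p_T(x) p_U(y)`. -/
def BinomialType {V K : Type*} [DecidableEq V] [Field K] [CharZero K]
    (p : Finset V → Polynomial K) : Prop :=
  ∀ S : Finset V, ∀ x y : K,
    (p S).eval (x + y) = ∑ T ∈ S.powerset, (p T).eval x * (p (S \ T)).eval y

/-- The umbral product of two functionals. -/
def umbralMul {K : Type*} [Field K] (L M : Polynomial K → K) : Polynomial K → K :=
  fun f => ∑ n ∈ f.support, f.coeff n *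
    ∑ k ∈ Finset.range (n + 1), (n.choose k : K) * L (X ^ k) * M (X ^ (n - k))

/-- Umbral powers of a functional, with `A^0 f = f(0)`. -/
def umbralPow {K : Type*} [Field K] (A : Polynomial K → K) : ℕ → Polynomial K → K
  | 0 => fun f => f.eval 0
  | k + 1 => umbralMul A (umbralPow A k)

/-!
Applying `A^k` to `p_S` and using the binomial identity of `p` `k` times splits `S` into `k` ordered
blocks; ordered splittings with an empty block contribute nothing because `A (p ∅) = A 1 = 0`, so
`A^k p_S = k! ∑_{σ ⊢ S, ℓ(σ) = k} ∏_{T ∈ σ} A p_T`. On the other hand the `a_n` form a basis of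
`K[X]`, and `A^k a_n = k! δ_{nk}` says that `A^k / k!` is the `k`-th coordinate functional of that
basis, so every polynomial is `f = ∑_k (A^k f / k!) a_k`.
-/

open Finset
open scoped Nat

section Umbral

variable {K : Type*} [Field K]

def umbralMulLinear (L M : K[X] → K) : K[X] →ₗ[K] K :=
  Polynomial.lsum fun n => LinearMap.id.smulRight
    (∑ k ∈ range (n + 1), (n.choose k : K) * L (X ^ k) * M (X ^ (n - k)))

theorem coe_umbralMulLinear (L M : K[X] → K) : ⇑(umbralMulLinear L M) = umbralMul L M := by
  ext f
  simp [umbralMulLinear, umbralMul, Polynomial.sum]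

def umbralPowLinear (A : K[X] → K) : ℕ → K[X] →ₗ[K] K
  | 0 => Polynomial.leval 0
  | k + 1 => umbralMulLinear A (umbralPow A k)

theorem coe_umbralPowLinear (A : K[X] → K) (k : ℕ) : ⇑(umbralPowLinear A k) = umbralPow A k := by
  cases k with
  | zero => rfl
  | succ k => exact coe_umbralMulLinear _ _

-- `umbralMul L M f` is `(L ⊗ M) (f (X + Y))`, and `f (X + Y) = ∑ₖ X ^ k * (hasseDeriv k f) (Y)`.
theorem umbralMul_eq_map_sum_hasseDeriv (L : K[X] → K) (M : K[X] →ₗ[K] K) {f : K[X]} {N : ℕ}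
    (hN : f.natDegree ≤ N) :
    umbralMul L M f = M (∑ k ∈ range (N + 1), L (X ^ k) • hasseDeriv k f) := by
  simp only [umbralMul, hasseDeriv_apply, Polynomial.sum, map_sum, map_smul,
    ← C_mul_X_pow_eq_monomial, ← smul_eq_C_mul, smul_eq_mul, mul_sum]
  rw [sum_comm]
  refine sum_congr rfl fun n hn => ?_
  have hnN : n ≤ N := (le_natDegree_of_mem_supp n hn).trans hN
  rw [← sum_subset (range_subset_range.2 (by omega : n + 1 ≤ N + 1)) fun k _ hk => by
    simp [Nat.choose_eq_zero_of_lt (by simpa using hk : n < k)]]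
  exact sum_congr rfl fun k _ => by ring

theorem eval_sum_hasseDeriv (L : K[X] →ₗ[K] K) {f : K[X]} {N : ℕ} (hN : f.natDegree ≤ N) (y : K) :
    (∑ k ∈ range (N + 1), L (X ^ k) • hasseDeriv k f).eval y = L (taylor y f) := by
  conv_rhs => rw [(taylor y f).as_sum_range' (N + 1) (by rw [natDegree_taylor]; omega)]
  simp only [eval_finsetSum, eval_smul, map_sum, ← smul_X_eq_monomial, map_smul, taylor_coeff,
    smul_eq_mul, mul_comm]

end Umbral

section Partitions

variable {V : Type*} [DecidableEq V] {S T : Finset V} {P Q : Finset (Finset V)}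

theorem mem_partitions : P ∈ partitions S ↔
    (∀ T ∈ P, T ≠ ∅) ∧ P.sup id = S ∧ ∀ T ∈ P, ∀ U ∈ P, T ≠ U → Disjoint T U := by
  simp only [partitions, mem_filter, mem_powerset, and_iff_right_iff_imp]
  rintro ⟨-, rfl, -⟩ T hT
  exact mem_powerset.2 (le_sup (f := id) hT)

theorem subset_of_mem_partitions (hP : P ∈ partitions S) (hT : T ∈ P) : T ⊆ S :=
  (mem_partitions.1 hP).2.1 ▸ le_sup (f := id) hT

theorem notMem_of_mem_partitions_sdiff (hT : T ≠ ∅) (hP : P ∈ partitions (S \ T)) : T ∉ P :=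
  fun hTP => hT <| disjoint_self.1 (subset_sdiff.1 (subset_of_mem_partitions hP hTP)).2

theorem insert_mem_partitions (hTS : T ⊆ S) (hT : T ≠ ∅) (hP : P ∈ partitions (S \ T)) :
    insert T P ∈ partitions S := by
  obtain ⟨hne, hsup, hdisj⟩ := mem_partitions.1 hP
  have hTU : ∀ U ∈ P, Disjoint T U := fun U hU =>
    (subset_sdiff.1 (subset_of_mem_partitions hP hU)).2.symm
  refine mem_partitions.2 ⟨?_, ?_, ?_⟩
  · simpa [hT] using hne
  · rw [sup_insert, hsup]
    exact union_sdiff_of_subset hTS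
  · simp only [mem_insert]
    rintro U (rfl | hU) W (rfl | hW) hUW
    exacts [absurd rfl hUW, hTU W hW, (hTU U hU).symm, hdisj U hU W hW hUW]

theorem erase_mem_partitions (hQ : Q ∈ partitions S) (hT : T ∈ Q) :
    Q.erase T ∈ partitions (S \ T) := by
  obtain ⟨hne, hsup, hdisj⟩ := mem_partitions.1 hQ
  refine mem_partitions.2 ⟨fun U hU => hne U (mem_of_mem_erase hU), ?_,
    fun U hU W hW => hdisj U (mem_of_mem_erase hU) W (mem_of_mem_erase hW)⟩
  have hTdisj : Disjoint T ((Q.erase T).sup id) := Finset.disjoint_sup_right.2 fun U hU =>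
    hdisj T hT U (mem_of_mem_erase hU) (ne_of_mem_erase hU).symm
  rw [← union_sdiff_cancel_left hTdisj, ← hsup]
  conv_rhs => rw [← insert_erase hT, sup_insert]
  rfl

theorem filter_partitions_card_eq_zero :
    (partitions S).filter (·.card = 0) = if S = ∅ then {∅} else ∅ := by
  have hempty : ∅ ∈ partitions S ↔ S = ∅ := by simp [mem_partitions, eq_comm]
  simp only [card_eq_zero, filter_eq', hempty]


theorem sum_sum_partitions_sdiff {R : Type*} [AddCommMonoid R]
    (f : Finset V → Finset (Finset V) → R) (S : Finset V) (k : ℕ) :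
    ∑ T ∈ S.powerset with T ≠ ∅, ∑ P ∈ partitions (S \ T) with P.card = k, f T P =
      ∑ Q ∈ partitions S with Q.card = k + 1, ∑ T ∈ Q, f T (Q.erase T) := by
  rw [sum_sigma', sum_sigma']
  refine sum_bij' (fun x _ => ⟨insert x.1 x.2, x.1⟩) (fun y _ => ⟨y.2, y.1.erase y.2⟩)
    ?_ ?_ ?_ ?_ ?_
  · rintro ⟨T, P⟩ hx
    simp only [mem_sigma, mem_filter, mem_powerset] at hx ⊢
    obtain ⟨⟨hTS, hT⟩, hP, rfl⟩ := hx
    exact ⟨⟨insert_mem_partitions hTS hT hP,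
      card_insert_of_notMem (notMem_of_mem_partitions_sdiff hT hP)⟩, mem_insert_self T P⟩
  · rintro ⟨Q, T⟩ hy
    simp only [mem_sigma, mem_filter, mem_powerset] at hy ⊢
    obtain ⟨⟨hQ, hcard⟩, hT⟩ := hy
    exact ⟨⟨subset_of_mem_partitions hQ hT, (mem_partitions.1 hQ).1 T hT⟩,
      erase_mem_partitions hQ hT, by rw [card_erase_of_mem hT, hcard, Nat.add_sub_cancel]⟩
  all_goals
    rintro ⟨_, _⟩ hx
    simp only [mem_sigma, mem_filter, mem_powerset] at hx
  · rw [erase_insert (notMem_of_mem_partitions_sdiff hx.1.2 hx.2.1)]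
  · rw [insert_erase hx.2]
  · rw [erase_insert (notMem_of_mem_partitions_sdiff hx.1.2 hx.2.1)]

theorem sum_mul_sum_partitions_sdiff {R : Type*} [CommSemiring R] (w : Finset V → R)
    (S : Finset V) (k : ℕ) :
    ∑ T ∈ S.powerset with T ≠ ∅, w T * ∑ P ∈ partitions (S \ T) with P.card = k, ∏ U ∈ P, w U =
      (k + 1) * ∑ Q ∈ partitions S with Q.card = k + 1, ∏ U ∈ Q, w U := by
  simp only [mul_sum]
  rw [sum_sum_partitions_sdiff (fun T P => w T * ∏ U ∈ P, w U)]
  refine sum_congr rfl fun Q hQ => ?_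
  rw [sum_congr rfl fun T hT => mul_prod_erase Q w hT, sum_const, (mem_filter.1 hQ).2,
    nsmul_eq_mul]
  push_cast
  rfl

end Partitions

namespace BinomialType

variable {V K : Type*} [DecidableEq V] [Field K] [CharZero K] {p : Finset V → K[X]}

theorem taylor_eq (hp : BinomialType p) (S : Finset V) (y : K) :
    taylor y (p S) = ∑ T ∈ S.powerset, (p (S \ T)).eval y • p T :=
  Polynomial.funext fun x => by
    simp only [taylor_eval, hp S x y, eval_finsetSum, eval_smul, smul_eq_mul, mul_comm]

theorem umbralMul_eq (hp : BinomialType p) (L M : K[X] →ₗ[K] K) (S : Finset V) :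
    umbralMul L M (p S) = ∑ T ∈ S.powerset, L (p T) * M (p (S \ T)) := by
  have key : ∑ k ∈ range ((p S).natDegree + 1), L (X ^ k) • hasseDeriv k (p S) =
      ∑ T ∈ S.powerset, L (p T) • p (S \ T) := Polynomial.funext fun y => by
    simp only [eval_sum_hasseDeriv L le_rfl, hp.taylor_eq, map_sum, map_smul, eval_finsetSum,
      eval_smul, smul_eq_mul, mul_comm]
  simp only [umbralMul_eq_map_sum_hasseDeriv L M le_rfl, key, map_sum, map_smul, smul_eq_mul]

theorem eval_zero (hp : BinomialType p) (hp1 : p ∅ = 1) (S : Finset V) :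
    (p S).eval 0 = if S = ∅ then 1 else 0 := by
  induction S using Finset.strongInduction with
  | _ S ih =>
    split_ifs with hS
    · simp [hS, hp1]
    have h := hp S 0 0
    rw [add_zero, sum_eq_add_of_mem ∅ S (empty_mem_powerset S) (mem_powerset_self S)
      (Ne.symm hS) fun T hT hTne => ?_] at h
    · simpa [hp1] using h
    rw [ih T (ssubset_of_subset_of_ne (mem_powerset.1 hT) hTne.2), if_neg hTne.1, zero_mul]

theorem umbralPow_eq (hp : BinomialType p) (hp1 : p ∅ = 1) {A : K[X] →ₗ[K] K} (hA1 : A 1 = 0)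
    (k : ℕ) (S : Finset V) :
    umbralPow A k (p S) = k ! * ∑ P ∈ partitions S with P.card = k, ∏ T ∈ P, A (p T) := by
  induction k generalizing S with
  | zero =>
    change (p S).eval 0 = _
    rw [hp.eval_zero hp1, filter_partitions_card_eq_zero]
    split_ifs <;> simp
  | succ k ih =>
    rw [umbralPow, ← coe_umbralPowLinear, hp.umbralMul_eq,
      ← sum_filter_of_ne (p := (· ≠ ∅)) fun T _ hT hT0 =>
      hT (by rw [hT0, hp1, hA1, zero_mul])]
    simp only [coe_umbralPowLinear, ih, mul_left_comm _ (k ! : K), ← mul_sum,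
      sum_mul_sum_partitions_sdiff, Nat.factorial_succ]
    push_cast
    ring

end BinomialType

theorem eq_sum_C_umbralPow_div_mul {K : Type*} [Field K] [CharZero K] {a : ℕ → K[X]}
    (hdeg : ∀ n, (a n).degree = n) {A : K[X] →ₗ[K] K}
    (hassoc : ∀ k n : ℕ, umbralPow A k (a n) = if n = k then (k ! : K) else 0)
    (f : K[X]) (s : Finset ℕ) (hs : ∀ k ∉ s, umbralPow A k f = 0) :
    f = ∑ k ∈ s, C (umbralPow A k f / k !) * a k := by
  let b := (Sequence.mk a hdeg).basis fun i =>
    (leadingCoeff_ne_zero.2 ((Sequence.mk a hdeg).ne_zero i)).isUnit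
  have hb (i : ℕ) : b i = a i := Sequence.basis_eq_self _ _ i
  have hcoord (k : ℕ) : umbralPowLinear A k = (k ! : K) • b.coord k :=
    b.ext fun i => by
      rw [LinearMap.smul_apply, b.coord_apply, b.repr_self, Finsupp.single_apply,
        coe_umbralPowLinear, hb, hassoc, smul_eq_mul, mul_ite, mul_one, mul_zero]
  have hrepr (k : ℕ) : b.repr f k = umbralPow A k f / k ! := by
    rw [← coe_umbralPowLinear, hcoord, LinearMap.smul_apply, b.coord_apply, smul_eq_mul,
      mul_div_cancel_left₀ _ (Nat.cast_ne_zero.2 k.factorial_ne_zero)]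
  have hsupp : (b.repr f).support ⊆ s := fun k hk => by
    by_contra hks
    simp [hrepr, hs k hks] at hk
  conv_lhs => rw [← b.linearCombination_repr f]
  rw [Finsupp.linearCombination_apply, Finsupp.sum_of_support_subset _ hsupp _ (by simp)]
  simp [hrepr, hb, smul_eq_C_mul]

theorem binomialType_expansion_general {V K : Type*} [DecidableEq V] [Field K] [CharZero K]
    (a : ℕ → Polynomial K) (hdeg : ∀ n, (a n).degree = n)
    (A : Polynomial K →ₗ[K] K) (hA1 : A 1 = 0)
    (hassoc : ∀ k n : ℕ,
      umbralPow (⇑A) k (a n) = if n = k then (k.factorial : K) else 0)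
    (p : Finset V → Polynomial K) (hp : BinomialType p) (hp1 : p ∅ = 1) :
    ∀ S : Finset V,
      p S = ∑ P ∈ partitions S, Polynomial.C (∏ T ∈ P, A (p T)) * a P.card := by
  intro S
  have hcoeff (k : ℕ) : umbralPow A k (p S) / k ! =
      ∑ P ∈ partitions S with P.card = k, ∏ T ∈ P, A (p T) := by
    rw [hp.umbralPow_eq hp1 hA1, mul_div_cancel_left₀ _ (Nat.cast_ne_zero.2 k.factorial_ne_zero)]
  calc p S = ∑ k ∈ (partitions S).image card, C (umbralPow A k (p S) / k !) * a k :=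
        eq_sum_C_umbralPow_div_mul hdeg hassoc _ _ fun k hk => by
          rw [hp.umbralPow_eq hp1 hA1, filter_eq_empty_iff.2 fun P hP hcard =>
            hk (mem_image.2 ⟨P, hP, hcard⟩), sum_empty, mul_zero]
    _ = ∑ k ∈ (partitions S).image card, ∑ P ∈ partitions S with P.card = k,
          C (∏ T ∈ P, A (p T)) * a P.card := sum_congr rfl fun k _ => by
        rw [hcoeff, map_sum, sum_mul]
        exact sum_congr rfl fun P hP => by rw [(mem_filter.1 hP).2]
    _ = _ := sum_fiberwise_of_maps_to (fun P hP => mem_image_of_mem card hP) _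

/-- Expansion of a nontrivial polynomial set map of binomial type in terms of
a polynomial sequence of binomial type associated to a delta functional `A`:
`p_S(x) = ∑_{σ ⊢ S} a_{ℓ(σ)}(x) ∏_{T ∈ σ} A p_T(x)`. -/
theorem binomialType_expansion {V K : Type*} [DecidableEq V] [Field K] [CharZero K]
    (a : ℕ → Polynomial K) (hdeg : ∀ n, (a n).degree = n)
    (hbin : ∀ n : ℕ, ∀ x y : K,
      (a n).eval (x + y) =
        ∑ k ∈ Finset.range (n + 1), (n.choose k : K) * (a k).eval x * (a (n - k)).eval y)
    (A : Polynomial K →ₗ[K] K) (hA1 : A 1 = 0) (hAX : A X ≠ 0)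
    (hassoc : ∀ k n : ℕ,
      umbralPow (⇑A) k (a n) = if n = k then (k.factorial : K) else 0)
    (p : Finset V → Polynomial K) (hp : BinomialType p) (hp1 : p ∅ = 1) :
    ∀ S : Finset V,
      p S = ∑ P ∈ partitions S, Polynomial.C (∏ T ∈ P, A (p T)) * a P.card :=
  binomialType_expansion_general a hdeg A hA1 hassoc p hp hp1
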